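/- arXiv:1701.06268 — 8 statements merged into one kernel-verified Lean document; each statement's English description precedes it below -/
import Mathlib

section
/- Let d be a power of 2. Then for every integer N ≥ d, the largest power of 2 dividing C(N, d) equals the largest power of 2 dividing ⌊N/d⌋. -/
/-!
The statement holds for any prime `p` and `d = p^ℓ`. Write `N = p^ℓ q + r` with `r < p^ℓ`.
In base `p` the digits of `p^ℓ q + r` are those of `r` (padded to length `ℓ`) followed by those
of `q`, so in Kummer's formula `(p - 1) v_p(C(N, p^ℓ)) = s(p^ℓ) + s(N - p^ℓ) - s(N)` the digits
of `r` cancel and what is left is `1 + s(q - 1) - s(q)`, which is Kummer's formula for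
`C(q, 1) = q`.
-/

namespace Nat

theorem digits_sum_base_pow_mul_add {b ℓ q r : ℕ} (hb : 1 < b) (hr : r < b ^ ℓ) :
    (b.digits (b ^ ℓ * q + r)).sum = (b.digits q).sum + (b.digits r).sum := by
  rcases Nat.eq_zero_or_pos q with rfl | hq
  · simp
  obtain ⟨k, hk⟩ : ∃ k, ℓ = (b.digits r).length + k :=
    Nat.exists_eq_add_of_le ((digits_length_le_iff hb r).2 hr)
  rw [add_comm, hk, ← digits_append_zeroes_append_digits hb hq]
  simp only [List.sum_append, List.sum_replicate, smul_zero, add_zero, add_comm]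

theorem digits_sum_base_pow {b : ℕ} (hb : 1 < b) (ℓ : ℕ) : (b.digits (b ^ ℓ)).sum = 1 := by
  simpa [hb] using digits_sum_base_pow_mul_add (q := 1) hb (pow_pos (by omega) ℓ)

end Nat

section

variable {p : ℕ} [hp : Fact p.Prime]

theorem sub_one_mul_padicValNat_succ_eq_sub_sum_digits (n : ℕ) :
    (p - 1) * padicValNat p (n + 1) = 1 + (p.digits n).sum - (p.digits (n + 1)).sum := by
  simpa [hp.out.one_lt] using
    sub_one_mul_padicValNat_choose_eq_sub_sum_digits' (p := p) (n := n) (k := 1)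

theorem padicValNat_choose_prime_pow {ℓ N : ℕ} (h : p ^ ℓ ≤ N) :
    padicValNat p (N.choose (p ^ ℓ)) = padicValNat p (N / p ^ ℓ) := by
  have hp1 : 1 < p := hp.out.one_lt
  have hpℓ : 0 < p ^ ℓ := pow_pos (by omega) ℓ
  obtain ⟨q, r, hr, rfl⟩ : ∃ q r, r < p ^ ℓ ∧ N = p ^ ℓ * (q + 1) + r := by
    refine ⟨N / p ^ ℓ - 1, N % p ^ ℓ, Nat.mod_lt _ hpℓ, ?_⟩
    rw [Nat.sub_add_cancel ((Nat.one_le_div_iff hpℓ).2 h), Nat.div_add_mod]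
  have hsub : p ^ ℓ * (q + 1) + r - p ^ ℓ = p ^ ℓ * q + r := by
    rw [Nat.mul_succ]; omega
  have hquot : (p ^ ℓ * (q + 1) + r) / p ^ ℓ = q + 1 := by
    rw [Nat.mul_add_div hpℓ, Nat.div_eq_of_lt hr, add_zero]
  apply Nat.eq_of_mul_eq_mul_left (by omega : 0 < p - 1)
  rw [sub_one_mul_padicValNat_choose_eq_sub_sum_digits h, hsub, hquot,
    sub_one_mul_padicValNat_succ_eq_sub_sum_digits, Nat.digits_sum_base_pow hp1,
    Nat.digits_sum_base_pow_mul_add hp1 hr, Nat.digits_sum_base_pow_mul_add hp1 hr]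
  omega

end

/-- If `d` is a power of 2 and `N ≥ d`, then the largest power of 2 dividing `C(N, d)`
equals the largest power of 2 dividing `⌊N / d⌋`. -/
theorem stmt3 (d N : ℕ) (hd : ∃ ℓ : ℕ, d = 2 ^ ℓ) (hN : d ≤ N) :
    (N.choose d).factorization 2 = (N / d).factorization 2 := by
  obtain ⟨ℓ, rfl⟩ := hd
  have : Fact (Nat.Prime 2) := ⟨Nat.prime_two⟩
  simp only [Nat.factorization_def _ Nat.prime_two, padicValNat_choose_prime_pow hN]
end

section
/- (Schwartz–Zippel over ℤ/2^kℤ) Let Q be a nonzero multilinear polynomial of degree at most d in n variables over the ring ℤ/2^kℤ. Then the fraction of points x ∈ {0,1}^n with Q(x) ≠ 0 is at least 1/2^d. -/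
/-!
Let `B` be a monomial of maximal degree with `c B ≠ 0`. Fix the variables outside `B` arbitrarily.
The alternating sum of the resulting values over the `2^|B|` assignments of the variables in `B`
is, by Möbius inversion on the subsets of `B`, the coefficient of `B` in the restricted
polynomial, which is `c B` by maximality. So every one of the `2^(n-|B|)` fibres contains a point
where the polynomial does not vanish, and `|B| ≤ d`. This works over any commutative ring.
-/

/-- Evaluation of the multilinear polynomial with coefficients `c` at the Boolean point `x`. -/
def evalML {n k : ℕ} (c : Finset (Fin n) → ZMod (2 ^ k)) (x : Fin n → Bool) : ZMod (2 ^ k) :=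
  ∑ S : Finset (Fin n), c S * ∏ i ∈ S, (if x i then 1 else 0)

open Finset

variable {ι R : Type*} [DecidableEq ι] [CommRing R]

theorem Finset.sum_Icc_neg_one_pow_card_sdiff (A B : Finset ι) :
    ∑ T ∈ Icc A B, (-1 : R) ^ #(B \ T) = if A = B then 1 else 0 := by
  by_cases hAB : A ⊆ B
  · rw [Icc_eq_image_powerset hAB, sum_image fun U hU V hV h => ?_]
    · have : ∑ U ∈ (B \ A).powerset, (-1 : R) ^ #(B \ (A ∪ U)) = (1 + -1) ^ #(B \ A) := by
        rw [← prod_const, prod_add]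
        simp [sdiff_sdiff_left]
      rw [this, add_neg_cancel, zero_pow_eq]
      refine if_congr ?_ rfl rfl
      rw [card_eq_zero, sdiff_eq_empty_iff_subset]
      exact ⟨hAB.antisymm, fun h => h ▸ subset_rfl⟩
    · simp only [coe_powerset, Set.mem_preimage, Set.mem_powerset_iff, coe_subset, subset_sdiff]
        at hU hV
      rw [← union_sdiff_cancel_left hU.2.symm, h, union_sdiff_cancel_left hV.2.symm]
  · rw [Icc_eq_empty (by simpa using hAB), sum_empty, if_neg (by rintro rfl; exact hAB subset_rfl)]

/-- The multilinear polynomial with coefficients `c`, evaluated at the indicator vector of `X`. -/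
def evalIndicator (c : Finset ι → R) (X : Finset ι) : R :=
  ∑ S ∈ X.powerset, c S

theorem sum_powerset_neg_one_pow_mul_evalIndicator_union [Fintype ι] (c : Finset ι → R)
    (B Y : Finset ι) :
    ∑ T ∈ B.powerset, (-1 : R) ^ #(B \ T) * evalIndicator c (T ∪ Y) =
      ∑ S with S \ Y = B, c S := by
  have heval (T : Finset ι) :
      evalIndicator c (T ∪ Y) = ∑ S, if S \ Y ⊆ T then c S else 0 := by
    rw [evalIndicator, ← filter_subset_univ, sum_filter]
    simp only [sdiff_le_iff, sup_eq_union, union_comm]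
  calc ∑ T ∈ B.powerset, (-1 : R) ^ #(B \ T) * evalIndicator c (T ∪ Y)
      = ∑ S, c S * ∑ T ∈ Icc (S \ Y) B, (-1 : R) ^ #(B \ T) := by
        simp only [heval, mul_sum, Icc_eq_filter_powerset, sum_filter]
        rw [sum_comm]
        refine sum_congr rfl fun S _ => sum_congr rfl fun T _ => ?_
        split_ifs <;> ring
    _ = ∑ S with S \ Y = B, c S := by
        simp only [sum_Icc_neg_one_pow_card_sdiff, mul_ite, mul_one, mul_zero, sum_filter]

theorem exists_evalIndicator_union_ne_zero [Fintype ι] {c : Finset ι → R} {B Y : Finset ι}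
    (hB : c B ≠ 0) (hmax : ∀ S, c S ≠ 0 → #S ≤ #B) (hY : Disjoint B Y) :
    ∃ T ⊆ B, evalIndicator c (T ∪ Y) ≠ 0 := by
  have htop : ∑ S with S \ Y = B, c S = c B := by
    refine sum_eq_single_of_mem B (by simpa using sdiff_eq_self_of_disjoint hY) fun S hS hSB => ?_
    rw [mem_filter] at hS
    have hBS : B ⊆ S := hS.2 ▸ sdiff_subset
    by_contra hS0
    exact (card_lt_card (ssubset_of_subset_of_ne hBS (Ne.symm hSB))).not_ge (hmax S hS0)
  rw [← sum_powerset_neg_one_pow_mul_evalIndicator_union] at htop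
  obtain ⟨T, hT, hne⟩ := exists_ne_zero_of_sum_ne_zero (htop ▸ hB)
  exact ⟨T, mem_powerset.mp hT, right_ne_zero_of_mul hne⟩

theorem two_pow_card_le_two_pow_mul_card_evalIndicator_ne_zero [Fintype ι] [DecidableEq R]
    {c : Finset ι → R} {d : ℕ} (hdeg : ∀ S, c S ≠ 0 → #S ≤ d)
    (hne : ∃ S, c S ≠ 0) :
    2 ^ Fintype.card ι ≤ 2 ^ d * #{X | evalIndicator c X ≠ 0} := by
  obtain ⟨B, hB, hmax⟩ := exists_max_image {S | c S ≠ 0} card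
    (by simpa [Finset.Nonempty] using hne)
  simp only [mem_filter, mem_univ, true_and] at hB hmax
  have hsurj :
      Set.SurjOn (· \ B) ↑({X | evalIndicator c X ≠ 0} : Finset _) ↑Bᶜ.powerset := by
    intro Y hY
    have hBY : Disjoint B Y := subset_compl_iff_disjoint_left.mp (coe_subset.mp (by simpa using hY))
    obtain ⟨T, hTB, hT⟩ := exists_evalIndicator_union_ne_zero hB hmax hBY
    refine ⟨T ∪ Y, by simpa using hT, ?_⟩
    simp [union_sdiff_distrib, sdiff_eq_empty_iff_subset.mpr hTB,
      sdiff_eq_self_of_disjoint hBY.symm]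
  calc 2 ^ Fintype.card ι = 2 ^ #B * #Bᶜ.powerset := by
        rw [card_powerset, card_compl, ← pow_add, Nat.add_sub_cancel' (card_le_univ B)]
    _ ≤ 2 ^ d * #{X | evalIndicator c X ≠ 0} :=
        Nat.mul_le_mul (Nat.pow_le_pow_right two_pos (hdeg B hB)) (card_le_card_of_surjOn _ hsurj)

theorem evalML_eq_evalIndicator {n k : ℕ} (c : Finset (Fin n) → ZMod (2 ^ k))
    (x : Fin n → Bool) :
    evalML c x = evalIndicator c {i | x i} := by
  simp only [evalML, evalIndicator, prod_boole, mul_ite, mul_one, mul_zero, ← sum_filter]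
  congr 1
  ext S
  simp [subset_iff]

theorem stmt4_general (n d k : ℕ) (c : Finset (Fin n) → ZMod (2 ^ k))
    (hdeg : ∀ S, c S ≠ 0 → S.card ≤ d) (hne : ∃ S, c S ≠ 0) :
    2 ^ n ≤ 2 ^ d * (Finset.univ.filter (fun x : Fin n → Bool => evalML c x ≠ 0)).card := by
  have hsurj : Set.SurjOn (fun x : Fin n → Bool => ({i | x i} : Finset (Fin n)))
      ↑({x | evalML c x ≠ 0} : Finset _) ↑({X | evalIndicator c X ≠ 0} : Finset _) := by
    intro X hX
    refine ⟨fun i => decide (i ∈ X), ?_, by ext; simp⟩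
    simpa [evalML_eq_evalIndicator] using hX
  calc 2 ^ n = 2 ^ Fintype.card (Fin n) := by rw [Fintype.card_fin]
    _ ≤ _ := two_pow_card_le_two_pow_mul_card_evalIndicator_ne_zero hdeg hne
    _ ≤ _ := Nat.mul_le_mul_left _ (card_le_card_of_surjOn _ hsurj)

/-- Schwartz–Zippel over `ℤ/2^kℤ`: a nonzero multilinear polynomial of degree at most `d`
is nonzero on at least a `2^{-d}` fraction of Boolean points. -/
theorem stmt4 (n d k : ℕ) (hk : 1 ≤ k) (c : Finset (Fin n) → ZMod (2 ^ k))
    (hdeg : ∀ S, c S ≠ 0 → S.card ≤ d) (hne : ∃ S, c S ≠ 0) :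
    2 ^ n ≤ 2 ^ d * (Finset.univ.filter (fun x : Fin n → Bool => evalML c x ≠ 0)).card :=
  stmt4_general n d k c hdeg hne
end

section
/- (Hamming ball interpolation) A multilinear polynomial Q of degree at most d over ℤ/2^kℤ vanishes at all points of {0,1}^n if and only if it vanishes at all points of {0,1}^n of Hamming weight at most d. More generally, the same holds for any Hamming ball of radius d in {0,1}^n. -/
open Finset

variable {ι R : Type*} [DecidableEq ι]

def flipCoords (W : Finset ι) (x : ι → Bool) : ι → Bool :=
  fun i => if i ∈ W then !x i else x i

@[simp]
lemma flipCoords_empty (x : ι → Bool) : flipCoords ∅ x = x := by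
  funext i
  simp [flipCoords]

lemma flipCoords_insert_apply_of_ne {j i : ι} (hij : i ≠ j) (W : Finset ι) (x : ι → Bool) :
    flipCoords (insert j W) x i = flipCoords W x i := by
  simp [flipCoords, hij]

lemma hammingDist_flipCoords [Fintype ι] {x z : ι → Bool} {W : Finset ι}
    (hW : W ⊆ univ.filter (fun i => x i ≠ z i)) :
    hammingDist (flipCoords W x) z = hammingDist x z - #W := by
  have hdiff : univ.filter (fun i => flipCoords W x i ≠ z i) =
      univ.filter (fun i => x i ≠ z i) \ W := by
    ext i
    simp only [mem_filter, mem_univ, true_and, mem_sdiff]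
    by_cases hi : i ∈ W
    · have hxz : x i ≠ z i := by simpa using hW hi
      simp [flipCoords, hi, hxz]
    · simp [flipCoords, hi]
  rw [hammingDist, hdiff, card_sdiff_of_subset hW, hammingDist]

section BoolDiff

variable [Ring R]

/-- The `|D|`-th order finite difference of `f` at `x` in the directions of `D`. -/
def boolDiff (D : Finset ι) (f : (ι → Bool) → R) (x : ι → Bool) : R :=
  ∑ W ∈ D.powerset, (-1) ^ #W * f (flipCoords W x)

lemma boolDiff_eq_zero_of_mem_of_independent {D : Finset ι} {j : ι} (hj : j ∈ D)
    {f : (ι → Bool) → R} (hf : ∀ x y : ι → Bool, (∀ i, i ≠ j → x i = y i) → f x = f y)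
    (x : ι → Bool) : boolDiff D f x = 0 := by
  have hjD : j ∉ D.erase j := notMem_erase j D
  rw [boolDiff, ← insert_erase hj, sum_powerset_insert hjD, ← sum_add_distrib]
  refine sum_eq_zero fun W hW => ?_
  have hjW : j ∉ W := fun h => hjD (mem_powerset.mp hW h)
  have hflip : f (flipCoords (insert j W) x) = f (flipCoords W x) :=
    hf _ _ fun i hij => flipCoords_insert_apply_of_ne hij W x
  rw [card_insert_of_notMem hjW, hflip, pow_succ, mul_neg_one, neg_mul, add_neg_cancel]

lemma boolDiff_sum {α : Type*} (s : Finset α) (D : Finset ι) (f : α → (ι → Bool) → R)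
    (x : ι → Bool) : boolDiff D (fun y => ∑ a ∈ s, f a y) x = ∑ a ∈ s, boolDiff D (f a) x := by
  simp only [boolDiff, mul_sum]
  exact sum_comm

lemma boolDiff_const_mul (D : Finset ι) (r : R) (f : (ι → Bool) → R) (x : ι → Bool) :
    boolDiff D (fun y => r * f y) x = r * boolDiff D f x := by
  simp only [boolDiff, mul_sum]
  refine sum_congr rfl fun W _ => ?_
  rw [← mul_assoc, ← mul_assoc, ((Commute.neg_one_left r).pow_left #W).eq]

theorem eq_zero_of_eq_zero_on_hammingBall [Fintype ι] {f : (ι → Bool) → R} {d : ℕ}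
    (hf : ∀ D x, d < #D → boolDiff D f x = 0) (z : ι → Bool)
    (hball : ∀ x, hammingDist x z ≤ d → f x = 0) (x : ι → Bool) : f x = 0 := by
  induction hm : hammingDist x z using Nat.strong_induction_on generalizing x with
  | _ m ih =>
    by_cases hmd : m ≤ d
    · exact hball x (hm ▸ hmd)
    set D : Finset ι := {i | x i ≠ z i}
    have hflip_zero : ∀ W ∈ D.powerset, W ≠ ∅ → (-1) ^ #W * f (flipCoords W x) = 0 := by
      intro W hW hWne
      have hWD := mem_powerset.mp hW
      have hWpos : 0 < #W := card_pos.mpr (nonempty_iff_ne_empty.mpr hWne)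
      have hle : #W ≤ m := hm ▸ card_le_card hWD
      rw [ih (m - #W) (by omega) _ (by rw [hammingDist_flipCoords hWD, hm]), mul_zero]
    have hsum := hf D x (by rw [← hm] at hmd; exact lt_of_not_ge hmd)
    rwa [boolDiff, sum_eq_single_of_mem ∅ (empty_mem_powerset D) hflip_zero,
      flipCoords_empty, card_empty, pow_zero, one_mul] at hsum

end BoolDiff

lemma boolDiff_evalML_eq_zero {n k d : ℕ} {c : Finset (Fin n) → ZMod (2 ^ k)}
    (hdeg : ∀ S, c S ≠ 0 → S.card ≤ d) {D : Finset (Fin n)} (hD : d < #D) (x : Fin n → Bool) :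
    boolDiff D (evalML c) x = 0 := by
  unfold evalML
  rw [boolDiff_sum]
  refine sum_eq_zero fun U _ => ?_
  rw [boolDiff_const_mul]
  by_cases hcU : c U = 0
  · rw [hcU, zero_mul]
  obtain ⟨j, hjD, hjU⟩ := exists_mem_notMem_of_card_lt_card (hD.trans_le' (hdeg U hcU))
  rw [boolDiff_eq_zero_of_mem_of_independent hjD, mul_zero]
  intro y y' hyy'
  exact prod_congr rfl fun i hi => by rw [hyy' i (ne_of_mem_of_not_mem hi hjU)]

/-- A multilinear polynomial of degree at most `d` over `ℤ/2^kℤ` vanishes everywhere on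
`{0,1}^n` iff it vanishes on the Hamming ball of radius `d` around an arbitrary point `z`.
Taking `z = 0` gives the Hamming-weight-at-most-`d` special case. -/
theorem stmt7 (n d k : ℕ) (c : Finset (Fin n) → ZMod (2 ^ k))
    (hdeg : ∀ S, c S ≠ 0 → S.card ≤ d) (z : Fin n → Bool) :
    (∀ x : Fin n → Bool,
        (Finset.univ.filter (fun i => x i ≠ z i)).card ≤ d → evalML c x = 0)
      ↔ (∀ x : Fin n → Bool, evalML c x = 0) :=
  ⟨fun hball => eq_zero_of_eq_zero_on_hammingBall
      (fun _ _ hD => boolDiff_evalML_eq_zero hdeg hD _) z hball,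
    fun h x _ => h x⟩
end

section
/- Let F : {0,1}^n → {0,1} be a Boolean function and d, k positive integers. If γ_{d,k}(F) > 1 − 1/2^d, then γ_{d,k}(F) = γ_{d,1}(F): any approximation over ℤ/2^kℤ achieving agreement better than 1 − 2^{−d} can be matched by a degree-d polynomial over 𝔽₂. -/
/-- The `k`-lift of a Boolean function: `0 ↦ 0`, `1 ↦ 2^{k-1} ∈ ℤ/2^kℤ`. -/
def lift {n : ℕ} (k : ℕ) (F : (Fin n → Bool) → Bool) (x : Fin n → Bool) : ZMod (2 ^ k) :=
  if F x then 2 ^ (k - 1) else 0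

/-- The number of Boolean points where `P` agrees with the `k`-lift of `F`. -/
def agrCount {n : ℕ} (k : ℕ) (F : (Fin n → Bool) → Bool)
    (c : Finset (Fin n) → ZMod (2 ^ k)) : ℕ :=
  (Finset.univ.filter (fun x : Fin n → Bool => evalML c x = lift k F x)).card

/-- `gamma n d k F` is the maximum, over multilinear polynomials of degree at most `d`
over `ℤ/2^kℤ`, of the number of points of agreement with the `k`-lift of `F`
(so `γ_{d,k}(F)` equals `gamma n d k F / 2^n`). -/
def gamma (n d k : ℕ) (F : (Fin n → Bool) → Bool) : ℕ :=
  (Finset.univ.filter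
      (fun c : Finset (Fin n) → ZMod (2 ^ k) => ∀ S, c S ≠ 0 → S.card ≤ d)).sup
    (agrCount k F)

open Finset

section SumOverSubsets

variable {ι M : Type*} [DecidableEq ι] [AddCommMonoid M]

/-- The value at the indicator vector of `T` of the multilinear polynomial with coefficients `c`. -/
def sumOverSubsets (c : Finset ι → M) (T : Finset ι) : M :=
  ∑ S ∈ T.powerset, c S

lemma sumOverSubsets_insert {a : ι} {T : Finset ι} (ha : a ∉ T) (c : Finset ι → M) :
    sumOverSubsets c (insert a T) =
      sumOverSubsets c T + sumOverSubsets (fun S => c (insert a S)) T :=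
  sum_powerset_insert ha c

lemma card_filter_powerset_insert {a : ι} {s : Finset ι} (ha : a ∉ s) (p : Finset ι → Prop)
    [DecidablePred p] :
    #{t ∈ (insert a s).powerset | p t} =
      #{t ∈ s.powerset | p t} + #{t ∈ s.powerset | p (insert a t)} := by
  simp only [card_filter]
  exact sum_powerset_insert ha _

lemma exists_subset_ne_zero_of_insert {a : ι} {A : Finset ι} {c : Finset ι → M}
    (hc : ∃ S ⊆ insert a A, c S ≠ 0) (hc₁ : ∀ S ⊆ A, c (insert a S) = 0) :
    ∃ S ⊆ A, c S ≠ 0 := by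
  obtain ⟨S, hSA, hS⟩ := hc
  by_cases haS : a ∈ S
  · refine absurd (hc₁ (S.erase a) ?_) ?_
    · simpa [subset_insert_iff] using hSA
    · rwa [insert_erase haS]
  · exact ⟨S, (subset_insert_iff_of_notMem haS).mp hSA, hS⟩

variable [DecidableEq M]

lemma card_filter_ne_zero_le_add {α : Type*} [DecidableEq α] {s : Finset α} {f g h : α → M}
    (hfgh : ∀ x ∈ s, h x = f x + g x) :
    #{x ∈ s | g x ≠ 0} ≤ #{x ∈ s | f x ≠ 0} + #{x ∈ s | h x ≠ 0} := by
  refine (card_le_card fun x hx => ?_).trans (card_union_le _ _)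
  rw [← filter_or, mem_filter] at *
  refine ⟨hx.1, not_and_or.mp fun h0 => hx.2 ?_⟩
  simpa [h0.1] using (hfgh x hx.1).symm.trans h0.2

lemma two_pow_card_le_mul_card_sumOverSubsets_ne_zero (A : Finset ι) (d : ℕ)
    (c : Finset ι → M) (hdeg : ∀ S ⊆ A, c S ≠ 0 → #S ≤ d) (hc : ∃ S ⊆ A, c S ≠ 0) :
    2 ^ #A ≤ 2 ^ d * #{T ∈ A.powerset | sumOverSubsets c T ≠ 0} := by
  induction A using Finset.induction_on generalizing d c with
  | empty =>
    obtain ⟨S, hS, hcS⟩ := hc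
    rw [subset_empty.mp hS] at hcS
    have hone : #{T ∈ (∅ : Finset ι).powerset | sumOverSubsets c T ≠ 0} = 1 := by
      rw [powerset_empty, filter_singleton, if_pos (by simpa [sumOverSubsets] using hcS)]
      rfl
    rw [hone, mul_one]
    exact Nat.one_le_two_pow
  | @insert a A ha ih =>
    -- Write `P = P₀ + x_a P₁`. If `P₁ ≠ 0` it has degree `< d`, and wherever `P₁(T) ≠ 0` one of
    -- `P(T)`, `P(T ∪ {a})` is nonzero; if `P₁ = 0`, then `P` takes the same values on both halves.
    set c₁ : Finset ι → M := fun S => c (insert a S)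
    have hsplit : ∀ T ∈ A.powerset,
        sumOverSubsets c (insert a T) = sumOverSubsets c T + sumOverSubsets c₁ T :=
      fun T hT => sumOverSubsets_insert (fun h => ha (mem_powerset.mp hT h)) c
    rw [card_insert_of_notMem ha, card_filter_powerset_insert ha, pow_succ']
    by_cases hc₁ : ∃ S ⊆ A, c₁ S ≠ 0
    · obtain ⟨S, hSA, hS⟩ := hc₁
      have hdeg₁ : ∀ S ⊆ A, c₁ S ≠ 0 → #S + 1 ≤ d := fun S hSA hS => by
        simpa [card_insert_of_notMem (fun h => ha (hSA h))] using
          hdeg (insert a S) (insert_subset_insert a hSA) hS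
      obtain ⟨d, rfl⟩ : ∃ d', d = d' + 1 := ⟨d - 1, by have := hdeg₁ S hSA hS; omega⟩
      calc 2 * 2 ^ #A ≤ 2 * (2 ^ d * #{T ∈ A.powerset | sumOverSubsets c₁ T ≠ 0}) :=
            Nat.mul_le_mul_left 2 <|
              ih d c₁ (fun S hSA hS => Nat.le_of_succ_le_succ (hdeg₁ S hSA hS)) ⟨S, hSA, hS⟩
        _ = 2 ^ (d + 1) * #{T ∈ A.powerset | sumOverSubsets c₁ T ≠ 0} := by ring
        _ ≤ _ := Nat.mul_le_mul_left _ (card_filter_ne_zero_le_add hsplit)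
    · simp only [not_exists, not_and, not_not] at hc₁
      have hsame : #{T ∈ A.powerset | sumOverSubsets c (insert a T) ≠ 0} =
          #{T ∈ A.powerset | sumOverSubsets c T ≠ 0} := by
        refine congrArg card (filter_congr fun T hT => ?_)
        have hT₁ : sumOverSubsets c₁ T = 0 := sum_eq_zero fun S hS =>
          hc₁ S ((mem_powerset.mp hS).trans (mem_powerset.mp hT))
        rw [hsplit T hT, hT₁, add_zero]
      rw [hsame, ← two_mul, mul_left_comm]
      exact Nat.mul_le_mul_left 2 <|
        ih d c (fun S hSA => hdeg S (hSA.trans (subset_insert a A)))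
          (exists_subset_ne_zero_of_insert hc hc₁)

end SumOverSubsets

section BooleanCube

variable {n k : ℕ}

lemma evalML_eq_sumOverSubsets (c : Finset (Fin n) → ZMod (2 ^ k)) (x : Fin n → Bool) :
    evalML c x = sumOverSubsets c {i | x i} := by
  simp only [evalML, sumOverSubsets, prod_boole, mul_ite, mul_one, mul_zero, ← sum_filter]
  congr 1
  ext S
  simp [subset_iff]

lemma card_evalML_ne_zero (c : Finset (Fin n) → ZMod (2 ^ k)) :
    #{x | evalML c x ≠ 0} = #{T | sumOverSubsets c T ≠ 0} := by
  let e : (Fin n → Bool) ≃ Finset (Fin n) :=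
    { toFun x := {i | x i}
      invFun T i := decide (i ∈ T)
      left_inv x := by funext i; simp
      right_inv T := by ext i; simp }
  exact card_equiv e (by simp [e, evalML_eq_sumOverSubsets])

lemma two_pow_le_mul_card_evalML_ne_zero {d : ℕ} {c : Finset (Fin n) → ZMod (2 ^ k)}
    (hdeg : ∀ S, c S ≠ 0 → #S ≤ d) (hc : c ≠ 0) :
    2 ^ n ≤ 2 ^ d * #{x | evalML c x ≠ 0} := by
  obtain ⟨S, hS⟩ := Function.ne_iff.mp hc
  simpa [card_evalML_ne_zero, powerset_univ] using
    two_pow_card_le_mul_card_sumOverSubsets_ne_zero univ d c (fun S _ => hdeg S)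
      ⟨S, subset_univ S, hS⟩

lemma evalML_map {m : ℕ} {G : Type*} [FunLike G (ZMod (2 ^ k)) (ZMod (2 ^ m))]
    [AddMonoidHomClass G (ZMod (2 ^ k)) (ZMod (2 ^ m))] (f : G)
    (c : Finset (Fin n) → ZMod (2 ^ k)) (x : Fin n → Bool) :
    evalML (fun S => f (c S)) x = f (evalML c x) := by
  simp only [evalML_eq_sumOverSubsets, sumOverSubsets, map_sum]

end BooleanCube

lemma two_mul_two_pow_pred_eq_zero (k : ℕ) : (2 : ZMod (2 ^ k)) * 2 ^ (k - 1) = 0 := by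
  rcases k with _ | k
  · decide
  · rw [← pow_succ']
    exact_mod_cast ZMod.natCast_self (2 ^ (k + 1))

/-- The additive embedding `b ↦ 2^(k-1) b` of `𝔽₂` into `ℤ/2^kℤ`. -/
def liftCoeff (k : ℕ) : ZMod 2 →+ ZMod (2 ^ k) :=
  ZMod.lift 2 ⟨zmultiplesHom _ (2 ^ (k - 1)), by simpa using two_mul_two_pow_pred_eq_zero k⟩

lemma liftCoeff_natCast (k m : ℕ) : liftCoeff k m = m * 2 ^ (k - 1) := by
  rw [← Int.cast_natCast, liftCoeff, ZMod.lift_coe]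
  simp

lemma liftCoeff_one (k : ℕ) : liftCoeff k 1 = 2 ^ (k - 1) := by
  simpa using liftCoeff_natCast k 1

lemma two_pow_pred_ne_zero {k : ℕ} (hk : 1 ≤ k) : (2 : ZMod (2 ^ k)) ^ (k - 1) ≠ 0 := by
  have : ¬ 2 ^ k ∣ 2 ^ (k - 1) := by
    rw [Nat.pow_dvd_pow_iff_le_right (by norm_num)]; omega
  exact_mod_cast (ZMod.natCast_eq_zero_iff _ _).not.mpr this

lemma liftCoeff_injective {k : ℕ} (hk : 1 ≤ k) : Function.Injective (liftCoeff k) := by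
  refine (injective_iff_map_eq_zero _).mpr fun b hb => ?_
  fin_cases b
  · rfl
  · exact absurd (liftCoeff_one k ▸ hb) (two_pow_pred_ne_zero hk)

def reduceMod (k : ℕ) : ZMod (2 ^ k) →+* ZMod (2 ^ (k - 1)) :=
  ZMod.castHom (pow_dvd_pow 2 (k.sub_le 1)) _

lemma exists_liftCoeff_eq_of_reduceMod_eq_zero {k : ℕ} {x : ZMod (2 ^ k)}
    (hx : reduceMod k x = 0) : ∃ b, liftCoeff k b = x := by
  rw [reduceMod, ZMod.castHom_apply, ZMod.cast_eq_val, ZMod.natCast_eq_zero_iff] at hx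
  obtain ⟨m, hm⟩ := hx
  refine ⟨m, ?_⟩
  rw [liftCoeff_natCast, ← ZMod.natCast_zmod_val x, hm]
  push_cast
  ring

section Agreement

variable {n k : ℕ} (F : (Fin n → Bool) → Bool)

lemma lift_eq_liftCoeff (x : Fin n → Bool) : lift k F x = liftCoeff k (lift 1 F x) := by
  unfold lift
  split_ifs
  · exact (liftCoeff_one k).symm
  · exact (map_zero _).symm

lemma reduceMod_lift (x : Fin n → Bool) : reduceMod k (lift k F x) = 0 := by
  unfold lift
  split_ifs
  · rw [map_pow, map_ofNat]
    exact_mod_cast ZMod.natCast_self (2 ^ (k - 1))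
  · exact map_zero _

lemma agrCount_liftCoeff (hk : 1 ≤ k) (e : Finset (Fin n) → ZMod 2) :
    agrCount k F (fun S => liftCoeff k (e S)) = agrCount 1 F e := by
  unfold agrCount
  congr 1
  refine filter_congr fun x _ => ?_
  rw [evalML_map (k := 1) (liftCoeff k), lift_eq_liftCoeff]
  exact (liftCoeff_injective hk).eq_iff

lemma reduceMod_eq_zero_of_large_agreement {d : ℕ} {c : Finset (Fin n) → ZMod (2 ^ k)}
    (hdeg : ∀ S, c S ≠ 0 → #S ≤ d) (hbig : (2 ^ d - 1) * 2 ^ n < 2 ^ d * agrCount k F c) :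
    ∀ S, reduceMod k (c S) = 0 := by
  by_contra! hc
  have hSZ := two_pow_le_mul_card_evalML_ne_zero (c := fun S => reduceMod k (c S))
    (fun S hS => hdeg S fun h => hS (by rw [h, map_zero])) (Function.ne_iff.mpr hc)
  have hdisj : #{x | evalML (fun S => reduceMod k (c S)) x ≠ 0} + agrCount k F c ≤ 2 ^ n := by
    have hcube : 2 ^ n = #(univ : Finset (Fin n → Bool)) := by simp
    rw [agrCount, hcube, add_comm,
      ← card_filter_add_card_filter_not (s := univ) (fun x => evalML c x = lift k F x)]
    refine Nat.add_le_add_left (card_le_card fun x => ?_) _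
    simp only [mem_filter, mem_univ, true_and, evalML_map]
    exact mt fun hx => hx ▸ reduceMod_lift F x
  have := Nat.mul_le_mul_left (2 ^ d) hdisj
  rw [Nat.sub_mul, one_mul] at hbig
  rw [Nat.mul_add] at this
  omega

lemma exists_eq_liftCoeff_of_large_agreement (hk : 1 ≤ k) {d : ℕ}
    {c : Finset (Fin n) → ZMod (2 ^ k)} (hdeg : ∀ S, c S ≠ 0 → #S ≤ d)
    (hbig : (2 ^ d - 1) * 2 ^ n < 2 ^ d * agrCount k F c) :
    ∃ e : Finset (Fin n) → ZMod 2, (∀ S, e S ≠ 0 → #S ≤ d) ∧ c = fun S => liftCoeff k (e S) := by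
  choose e he using fun S =>
    exists_liftCoeff_eq_of_reduceMod_eq_zero (reduceMod_eq_zero_of_large_agreement F hdeg hbig S)
  refine ⟨e, fun S hS => hdeg S ?_, funext fun S => (he S).symm⟩
  rw [← he S]
  exact (map_ne_zero_iff _ (liftCoeff_injective hk)).mpr hS

lemma agrCount_le_gamma {d : ℕ} {c : Finset (Fin n) → ZMod (2 ^ k)}
    (hdeg : ∀ S, c S ≠ 0 → #S ≤ d) : agrCount k F c ≤ gamma n d k F :=
  le_sup (mem_filter.mpr ⟨mem_univ c, hdeg⟩)

lemma exists_agrCount_eq_gamma (d : ℕ) :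
    ∃ c : Finset (Fin n) → ZMod (2 ^ k),
      (∀ S, c S ≠ 0 → #S ≤ d) ∧ agrCount k F c = gamma n d k F := by
  have hzero : (0 : Finset (Fin n) → ZMod (2 ^ k)) ∈
      univ.filter fun c : Finset (Fin n) → ZMod (2 ^ k) => ∀ S, c S ≠ 0 → #S ≤ d :=
    mem_filter.mpr ⟨mem_univ 0, fun _ h => (h rfl).elim⟩
  obtain ⟨c, hc, hsup⟩ := exists_mem_eq_sup _ ⟨0, hzero⟩ (agrCount k F)
  exact ⟨c, (mem_filter.mp hc).2, hsup.symm⟩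

end Agreement

theorem stmt10_general (n d k : ℕ) (hk : 1 ≤ k) (F : (Fin n → Bool) → Bool)
    (h : (2 ^ d - 1) * 2 ^ n < 2 ^ d * gamma n d k F) :
    gamma n d k F = gamma n d 1 F := by
  apply le_antisymm
  · obtain ⟨c, hdeg, hc⟩ := exists_agrCount_eq_gamma F (k := k) d
    obtain ⟨e, he, rfl⟩ := exists_eq_liftCoeff_of_large_agreement F hk hdeg (hc ▸ h)
    rw [← hc, agrCount_liftCoeff F hk]
    exact agrCount_le_gamma F he
  · obtain ⟨e, he, he_eq⟩ := exists_agrCount_eq_gamma F (k := 1) d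
    rw [← he_eq, ← agrCount_liftCoeff F hk]
    exact agrCount_le_gamma F fun S hS => he S fun h0 => hS (by rw [h0, map_zero])

/-- If `γ_{d,k}(F) > 1 - 2^{-d}` then `γ_{d,k}(F) = γ_{d,1}(F)`. -/
theorem stmt10 (n d k : ℕ) (hd : 1 ≤ d) (hk : 1 ≤ k) (F : (Fin n → Bool) → Bool)
    (h : (2 ^ d - 1) * 2 ^ n < 2 ^ d * gamma n d k F) :
    gamma n d k F = gamma n d 1 F :=
  stmt10_general n d k hk F h
end

section
/- Let ℓ ≥ 2 and d = 2^{ℓ−1} + 2^{ℓ−2}. For x ∈ {0,1}^n, letting B(x) denote the number of borrows when subtracting d from |x| in base 2: if |x|_{ℓ−2} = 0 and |x|_ℓ = 1 then B(x) = 2, and if either (|x|_{ℓ−2} = 0 and |x|_ℓ = 0) or (|x|_{ℓ−2}, |x|_{ℓ−1}, |x|_ℓ, |x|_{ℓ+1}) = (1,0,0,0), then B(x) ≥ 3. Here we assume |x| ≥ d. -/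
/-- Hamming weight of a Boolean vector. -/
def wt {n : ℕ} (x : Fin n → Bool) : ℕ :=
  (Finset.univ.filter (fun i => x i = true)).card

/-- `carryAux p a b i` is the carry into position `i` when adding `a` and `b` in base `p`. -/
def carryAux (p a b : ℕ) : ℕ → ℕ
  | 0 => 0
  | (i + 1) => if p ≤ a / p ^ i % p + b / p ^ i % p + carryAux p a b i then 1 else 0

/-- The number of borrows when subtracting `d` from `N` in base 2, i.e. the number of
carries when adding `d` and `N - d` in base 2. -/
def borrows (d N : ℕ) : ℕ :=
  ∑ i ∈ Finset.range (N + 1), carryAux 2 d (N - d) (i + 1)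

/-!
A borrow occurs at position `i + 1` of `N - d` exactly when `N % 2 ^ (i + 1) < d % 2 ^ (i + 1)`.
For `d = 2 ^ (k + 1) + 2 ^ k` the right side is `0` for `i < k`, `2 ^ k` for `i = k`, and `d`
itself for `i > k`; so positions up to `k` never borrow, position `k + 1` borrows iff bit `k` of
`N` is clear, and a higher position `i + 1` borrows iff `N % 2 ^ (i + 1) < d`, which the bits
`k, …, k + 3` of `N` decide.
-/

open Finset

lemma div_eq_ite_of_lt_two_mul {S p : ℕ} (hp : 0 < p) (hS : S < 2 * p) :
    S / p = if p ≤ S then 1 else 0 := by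
  split_ifs with h
  · rw [Nat.div_eq_iff hp]; omega
  · exact Nat.div_eq_of_lt (by omega)

lemma mod_add_mod_div_lt_two {a b q : ℕ} (hq : 0 < q) : (a % q + b % q) / q < 2 := by
  rw [Nat.div_lt_iff_lt_mul hq]
  have := Nat.mod_lt a hq
  have := Nat.mod_lt b hq
  omega

lemma carryAux_eq_div {p : ℕ} (hp : 1 < p) (a b i : ℕ) :
    carryAux p a b i = (a % p ^ i + b % p ^ i) / p ^ i := by
  induction i with
  | zero => simp [carryAux, Nat.mod_one]
  | succ i ih =>
    have hpi : 0 < p ^ i := by positivity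
    set c := (a % p ^ i + b % p ^ i) / p ^ i
    set S := a / p ^ i % p + b / p ^ i % p + c
    have hc : c < 2 := mod_add_mod_div_lt_two hpi
    have hsplit :
        a % p ^ (i + 1) + b % p ^ (i + 1) = p ^ i * S + (a % p ^ i + b % p ^ i) % p ^ i := by
      have hcmod : p ^ i * c + (a % p ^ i + b % p ^ i) % p ^ i = a % p ^ i + b % p ^ i :=
        Nat.div_add_mod _ _
      rw [Nat.mod_pow_succ, Nat.mod_pow_succ]
      simp only [S, mul_add]
      linarith
    have hS : S < 2 * p := by
      have := Nat.mod_lt (a / p ^ i) (by omega : 0 < p)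
      have := Nat.mod_lt (b / p ^ i) (by omega : 0 < p)
      omega
    rw [carryAux, ih, hsplit, pow_succ, ← Nat.div_div_eq_div_mul, Nat.mul_add_div hpi,
      Nat.div_eq_of_lt (Nat.mod_lt _ hpi), add_zero, div_eq_ite_of_lt_two_mul (by omega) hS]

lemma mod_add_mod_div_eq_ite {a b q : ℕ} (hq : 0 < q) :
    (a % q + b % q) / q = if (a + b) % q < a % q then 1 else 0 := by
  have hdiv := Nat.div_add_mod (a % q + b % q) q
  rw [← Nat.add_mod] at hdiv
  have := Nat.mod_lt b hq
  have hc := mod_add_mod_div_lt_two (a := a) (b := b) hq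
  interval_cases (a % q + b % q) / q <;> split_ifs <;> omega

lemma carryAux_sub {p d N : ℕ} (hp : 1 < p) (hdN : d ≤ N) (i : ℕ) :
    carryAux p d (N - d) i = if N % p ^ i < d % p ^ i then 1 else 0 := by
  rw [carryAux_eq_div hp, mod_add_mod_div_eq_ite (by positivity), Nat.add_sub_cancel' hdN]

lemma borrows_eq_card {d N : ℕ} (hdN : d ≤ N) :
    borrows d N = #{i ∈ range (N + 1) | N % 2 ^ (i + 1) < d % 2 ^ (i + 1)} := by
  simp only [borrows, carryAux_sub one_lt_two hdN, card_filter]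

lemma le_borrows_of_forall_mem_Icc {d N a b : ℕ} (hdN : d ≤ N) (hbN : b ≤ N)
    (h : ∀ i ∈ Icc a b, N % 2 ^ (i + 1) < d % 2 ^ (i + 1)) : b + 1 - a ≤ borrows d N := by
  rw [borrows_eq_card hdN, ← Nat.card_Icc]
  refine card_le_card fun i hi => mem_filter.mpr ⟨mem_range.mpr ?_, h i hi⟩
  have := (mem_Icc.mp hi).2
  omega

lemma Nat.mod_two_pow_succ_of_testBit_false {N m : ℕ} (h : N.testBit m = false) :
    N % 2 ^ (m + 1) = N % 2 ^ m := by
  rw [Nat.mod_pow_succ, ← Nat.toNat_testBit, h, Bool.toNat_false, mul_zero, add_zero]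

lemma Nat.mod_two_pow_succ_le (N m : ℕ) : N % 2 ^ (m + 1) ≤ N % 2 ^ m + 2 ^ m := by
  rw [Nat.mod_pow_succ, ← Nat.toNat_testBit]
  exact Nat.add_le_add_left (mul_le_of_le_one_right' (Bool.toNat_le _)) _

lemma Nat.two_pow_le_mod_two_pow_of_testBit {N j m : ℕ} (hjm : j < m) (h : N.testBit j = true) :
    2 ^ j ≤ N % 2 ^ m :=
  Nat.ge_two_pow_of_testBit (by simp [Nat.testBit_mod_two_pow, hjm, h])

section ThreeTwoPow

variable {k N : ℕ}

lemma two_pow_succ_add_two_pow_mod_of_le {i : ℕ} (hik : i ≤ k) :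
    (2 ^ (k + 1) + 2 ^ k) % 2 ^ i = 0 :=
  Nat.mod_eq_zero_of_dvd (dvd_add (pow_dvd_pow 2 (by omega)) (pow_dvd_pow 2 hik))

lemma two_pow_succ_add_two_pow_mod_two_pow_succ :
    (2 ^ (k + 1) + 2 ^ k) % 2 ^ (k + 1) = 2 ^ k := by
  rw [Nat.add_mod, Nat.mod_self, zero_add, Nat.mod_mod,
    Nat.mod_eq_of_lt (Nat.pow_lt_pow_succ one_lt_two)]

lemma two_pow_succ_add_two_pow_mod_of_lt {i : ℕ} (hki : k + 1 < i) :
    (2 ^ (k + 1) + 2 ^ k) % 2 ^ i = 2 ^ (k + 1) + 2 ^ k := by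
  refine Nat.mod_eq_of_lt (lt_of_lt_of_le ?_ (Nat.pow_le_pow_right two_pos hki))
  rw [pow_succ, pow_succ]
  have := Nat.two_pow_pos k
  omega

lemma borrows_eq_two_of_testBit (hdN : 2 ^ (k + 1) + 2 ^ k ≤ N) (h0 : N.testBit k = false)
    (h2 : N.testBit (k + 2) = true) : borrows (2 ^ (k + 1) + 2 ^ k) N = 2 := by
  have hk := Nat.mod_lt N (Nat.two_pow_pos k)
  have hkN : k < 2 ^ k := Nat.lt_two_pow_self
  have r1 := Nat.mod_two_pow_succ_of_testBit_false h0
  have r2 := Nat.mod_two_pow_succ_le N (k + 1)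
  have p1 : 2 ^ (k + 1) = 2 * 2 ^ k := by ring
  have p2 : 2 ^ (k + 2) = 4 * 2 ^ k := by ring
  rw [borrows_eq_card hdN]
  refine (congrArg card (?_ : _ = {k, k + 1})).trans (card_pair (by omega))
  ext i
  simp only [mem_filter, mem_range, mem_insert, mem_singleton]
  obtain hi | rfl | rfl | hi : i < k ∨ i = k ∨ i = k + 1 ∨ k + 2 ≤ i := by omega
  · rw [two_pow_succ_add_two_pow_mod_of_le hi]
    omega
  · rw [two_pow_succ_add_two_pow_mod_two_pow_succ]
    omega
  · rw [two_pow_succ_add_two_pow_mod_of_lt (by omega)]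
    omega
  · have := Nat.two_pow_le_mod_two_pow_of_testBit (m := i + 1) (by omega) h2
    rw [two_pow_succ_add_two_pow_mod_of_lt (by omega)]
    omega

lemma three_le_borrows_of_testBit_add_two (hdN : 2 ^ (k + 1) + 2 ^ k ≤ N)
    (h0 : N.testBit k = false) (h2 : N.testBit (k + 2) = false) :
    3 ≤ borrows (2 ^ (k + 1) + 2 ^ k) N := by
  have hk := Nat.mod_lt N (Nat.two_pow_pos k)
  have hkN : k < 2 ^ k := Nat.lt_two_pow_self
  have r1 := Nat.mod_two_pow_succ_of_testBit_false h0
  have r2 : N % 2 ^ (k + 2) ≤ N % 2 ^ (k + 1) + 2 ^ (k + 1) := Nat.mod_two_pow_succ_le N (k + 1)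
  have r3 : N % 2 ^ (k + 3) = N % 2 ^ (k + 2) := Nat.mod_two_pow_succ_of_testBit_false h2
  have p1 : 2 ^ (k + 1) = 2 * 2 ^ k := by ring
  have := le_borrows_of_forall_mem_Icc (a := k) (b := k + 2) hdN (by omega) fun i hi => by
    obtain rfl | rfl | rfl : i = k ∨ i = k + 1 ∨ i = k + 2 := by rw [mem_Icc] at hi; omega
    · rw [two_pow_succ_add_two_pow_mod_two_pow_succ]
      omega
    all_goals
      rw [two_pow_succ_add_two_pow_mod_of_lt (by omega)]
      simp only [add_assoc, Nat.reduceAdd]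
      omega
  omega

lemma three_le_borrows_of_testBit_add_one_two_three (hdN : 2 ^ (k + 1) + 2 ^ k ≤ N)
    (h1 : N.testBit (k + 1) = false) (h2 : N.testBit (k + 2) = false)
    (h3 : N.testBit (k + 3) = false) : 3 ≤ borrows (2 ^ (k + 1) + 2 ^ k) N := by
  have hk := Nat.mod_lt N (Nat.two_pow_pos (k + 1))
  have hkN : k < 2 ^ k := Nat.lt_two_pow_self
  have r2 : N % 2 ^ (k + 2) = N % 2 ^ (k + 1) := Nat.mod_two_pow_succ_of_testBit_false h1
  have r3 : N % 2 ^ (k + 3) = N % 2 ^ (k + 2) := Nat.mod_two_pow_succ_of_testBit_false h2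
  have r4 : N % 2 ^ (k + 4) = N % 2 ^ (k + 3) := Nat.mod_two_pow_succ_of_testBit_false h3
  have p1 : 2 ^ (k + 1) = 2 * 2 ^ k := by ring
  have := le_borrows_of_forall_mem_Icc (a := k + 1) (b := k + 3) hdN (by omega) fun i hi => by
    obtain rfl | rfl | rfl : i = k + 1 ∨ i = k + 2 ∨ i = k + 3 := by rw [mem_Icc] at hi; omega
    all_goals
      rw [two_pow_succ_add_two_pow_mod_of_lt (by omega)]
      simp only [add_assoc, Nat.reduceAdd]
      omega
  omega

end ThreeTwoPow

/-- Let `ℓ ≥ 2`, `d = 2^{ℓ-1} + 2^{ℓ-2}`, and `B(x)` the number of borrows when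
subtracting `d` from `|x|` in base 2 (where `|x| ≥ d`). If `|x|_{ℓ-2} = 0` and
`|x|_ℓ = 1` then `B(x) = 2`; if `|x|_{ℓ-2} = 0` and `|x|_ℓ = 0`, or
`(|x|_{ℓ-2}, |x|_{ℓ-1}, |x|_ℓ, |x|_{ℓ+1}) = (1,0,0,0)`, then `B(x) ≥ 3`. -/
theorem stmt12 (ℓ n : ℕ) (hl : 2 ≤ ℓ) (x : Fin n → Bool)
    (hw : 2 ^ (ℓ - 1) + 2 ^ (ℓ - 2) ≤ wt x) :
    ((wt x).testBit (ℓ - 2) = false ∧ (wt x).testBit ℓ = true →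
        borrows (2 ^ (ℓ - 1) + 2 ^ (ℓ - 2)) (wt x) = 2) ∧
    (((wt x).testBit (ℓ - 2) = false ∧ (wt x).testBit ℓ = false) ∨
        ((wt x).testBit (ℓ - 2) = true ∧ (wt x).testBit (ℓ - 1) = false ∧
          (wt x).testBit ℓ = false ∧ (wt x).testBit (ℓ + 1) = false) →
      3 ≤ borrows (2 ^ (ℓ - 1) + 2 ^ (ℓ - 2)) (wt x)) := by
  obtain ⟨k, rfl⟩ : ∃ k, ℓ = k + 2 := ⟨ℓ - 2, by omega⟩
  simp only [show k + 2 - 1 = k + 1 by omega, Nat.add_sub_cancel, add_assoc, Nat.reduceAdd]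
    at hw ⊢
  refine ⟨fun ⟨h0, h2⟩ => borrows_eq_two_of_testBit hw h0 h2, ?_⟩
  rintro (⟨h0, h2⟩ | ⟨-, h1, h2, h3⟩)
  · exact three_le_borrows_of_testBit_add_two hw h0 h2
  · exact three_le_borrows_of_testBit_add_one_two_three hw h1 h2 h3
end

section
/- Let ℓ ≥ 2 and d = 2^{ℓ−1} + 2^{ℓ−2}. Let N ≥ d be an integer and write N_i for the (i+1)-th least significant bit of N. If N_{ℓ−2} = 0, or if (N_{ℓ−2}, N_{ℓ−1}, N_ℓ, N_{ℓ+1}) = (1,0,0,0), then C(N, d) mod 8 equals 4·N_ℓ, i.e., it is 4 when N_ℓ = 1 (and N_{ℓ−2}=0) and 0 when N_ℓ = 0. -/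
/-!
By Legendre's formula, `(p - 1) v_p(C(n, k))` is a difference of base-`p` digit sums, and
digit sums are additive over a block of low digits; since the low `k` digits of `2^k * 3` vanish,
this gives `v₂(C(N, 2^k * 3)) = v₂(C(M, 3))` with `M = N / 2^k`. Under the bit conditions
`C(M, 3) ≡ 0` or `4 (mod 8)`, so its valuation is at least `2`, and a number with `2`-adic
valuation at least `2` is determined modulo `8` by that valuation. Finally `C(M, 3) mod 8` only
depends on `M mod 16`, which leaves a finite check.
-/

namespace Nat

theorem sum_digits_add_mul_base {b x : ℕ} (hb : 1 < b) (hx : x < b) (y : ℕ) :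
    (b.digits (x + b * y)).sum = x + (b.digits y).sum := by
  rcases eq_zero_or_pos x with rfl | hx0
  · rcases eq_zero_or_pos y with rfl | hy0
    · simp
    · rw [digits_add b hb 0 y hx (Or.inr hy0.ne'), List.sum_cons]
  · rw [digits_add b hb x y hx (Or.inl hx0.ne'), List.sum_cons]

theorem sum_digits_add_pow_mul {b k r : ℕ} (hb : 1 < b) (hr : r < b ^ k) (a : ℕ) :
    (b.digits (r + b ^ k * a)).sum = (b.digits r).sum + (b.digits a).sum := by
  induction k generalizing r with
  | zero => simp_all
  | succ k ih =>
    have hb0 : 0 < b := by omega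
    have hrb : r / b < b ^ k := by
      rw [div_lt_iff_lt_mul hb0, ← pow_succ]; exact hr
    have hsplit : r + b ^ (k + 1) * a = r % b + b * (r / b + b ^ k * a) := by
      conv_lhs => rw [← mod_add_div r b]
      ring
    conv_rhs => rw [← mod_add_div r b]
    rw [hsplit, sum_digits_add_mul_base hb (mod_lt r hb0), ih hrb,
      sum_digits_add_mul_base hb (mod_lt r hb0)]
    ring

theorem choose_three_add_sixteen (M : ℕ) :
    (M + 16).choose 3 = M.choose 3 + 16 * M.choose 2 + 120 * M + 560 := by
  rw [add_choose_eq, Finset.Nat.sum_antidiagonal_eq_sum_range_succ_mk]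
  simp only [Finset.sum_range_succ, Finset.sum_range_zero, Nat.reduceSub, choose_zero_right,
    choose_one_right, show choose 16 3 = 560 from rfl, show choose 16 2 = 120 from rfl]
  ring

theorem choose_three_mod_eight_eq_choose_mod_sixteen (M : ℕ) :
    M.choose 3 % 8 = (M % 16).choose 3 % 8 := by
  conv_lhs => rw [← mod_add_div M 16]
  induction M / 16 with
  | zero => simp
  | succ q ih =>
    rw [show M % 16 + 16 * (q + 1) = M % 16 + 16 * q + 16 by ring,
      choose_three_add_sixteen]
    omega

theorem choose_three_mod_eight_of_testBit (M : ℕ)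
    (h : M.testBit 0 = false ∨
      (M.testBit 0 = true ∧ M.testBit 1 = false ∧ M.testBit 2 = false ∧ M.testBit 3 = false)) :
    M.choose 3 % 8 = if M.testBit 2 then 4 else 0 := by
  have hbit : ∀ i < 4, M.testBit i = (M % 16).testBit i := fun i hi => by
    rw [show 16 = 2 ^ 4 from rfl, testBit_mod_two_pow, decide_eq_true hi, Bool.true_and]
  simp only [hbit 0 (by norm_num), hbit 1 (by norm_num), hbit 2 (by norm_num),
    hbit 3 (by norm_num)] at h ⊢
  rw [choose_three_mod_eight_eq_choose_mod_sixteen]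
  have hlt : M % 16 < 16 := mod_lt M (by norm_num)
  generalize M % 16 = j at hlt h ⊢
  revert j
  decide

end Nat

theorem padicValNat_choose_pow_mul (p : ℕ) [hp : Fact p.Prime] (n k m : ℕ) :
    padicValNat p (n.choose (p ^ k * m)) = padicValNat p ((n / p ^ k).choose m) := by
  have hpk : 0 < p ^ k := pow_pos hp.out.pos k
  obtain ⟨r, a, hr, rfl⟩ : ∃ r a, r < p ^ k ∧ n = r + p ^ k * a :=
    ⟨n % p ^ k, n / p ^ k, Nat.mod_lt n hpk, (Nat.mod_add_div n (p ^ k)).symm⟩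
  rw [Nat.add_mul_div_left _ _ hpk, Nat.div_eq_of_lt hr, zero_add]
  by_cases hm : m ≤ a
  · have hkm : p ^ k * m ≤ p ^ k * a := Nat.mul_le_mul_left _ hm
    have hsub : r + p ^ k * a - p ^ k * m = r + p ^ k * (a - m) := by
      rw [Nat.mul_sub]; omega
    have hdigits_m : (p.digits (p ^ k * m)).sum = (p.digits m).sum := by
      simpa using Nat.sum_digits_add_pow_mul hp.out.one_lt hpk m
    refine Nat.eq_of_mul_eq_mul_left (Nat.sub_pos_of_lt hp.out.one_lt) ?_
    rw [sub_one_mul_padicValNat_choose_eq_sub_sum_digits (by omega),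
      sub_one_mul_padicValNat_choose_eq_sub_sum_digits hm, hsub, hdigits_m,
      Nat.sum_digits_add_pow_mul hp.out.one_lt hr, Nat.sum_digits_add_pow_mul hp.out.one_lt hr]
    omega
  · have hlt : r + p ^ k * a < p ^ k * m :=
      calc r + p ^ k * a < p ^ k * (a + 1) := by rw [mul_add]; omega
        _ ≤ p ^ k * m := Nat.mul_le_mul_left _ (by omega)
    rw [Nat.choose_eq_zero_of_lt hlt, Nat.choose_eq_zero_of_lt (not_le.1 hm)]

theorem mod_eight_eq_of_padicValNat_two_eq {a b : ℕ} (ha : a ≠ 0) (hb : b ≠ 0)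
    (hab : padicValNat 2 a = padicValNat 2 b) (h4 : 4 ∣ b) : a % 8 = b % 8 := by
  have h4a := padicValNat_dvd_iff_le (p := 2) (n := 2) ha
  have h8a := padicValNat_dvd_iff_le (p := 2) (n := 3) ha
  have h4b := padicValNat_dvd_iff_le (p := 2) (n := 2) hb
  have h8b := padicValNat_dvd_iff_le (p := 2) (n := 3) hb
  norm_num at h4a h8a h4b h8b
  omega

/-- Let `ℓ ≥ 2`, `d = 2^{ℓ-1} + 2^{ℓ-2}` and `N ≥ d`. If `N_{ℓ-2} = 0`, or
`(N_{ℓ-2}, N_{ℓ-1}, N_ℓ, N_{ℓ+1}) = (1,0,0,0)`, then `C(N, d) mod 8 = 4·N_ℓ`. -/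
theorem stmt13 (ℓ N : ℕ) (hl : 2 ≤ ℓ) (hN : 2 ^ (ℓ - 1) + 2 ^ (ℓ - 2) ≤ N)
    (h : N.testBit (ℓ - 2) = false ∨
      (N.testBit (ℓ - 2) = true ∧ N.testBit (ℓ - 1) = false ∧
        N.testBit ℓ = false ∧ N.testBit (ℓ + 1) = false)) :
    N.choose (2 ^ (ℓ - 1) + 2 ^ (ℓ - 2)) % 8 = if N.testBit ℓ then 4 else 0 := by
  obtain ⟨k, rfl⟩ : ∃ k, ℓ = k + 2 := ⟨ℓ - 2, by omega⟩
  have hd : 2 ^ (k + 2 - 1) + 2 ^ (k + 2 - 2) = 2 ^ k * 3 := by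
    rw [show k + 2 - 1 = k + 1 by omega, Nat.add_sub_cancel]; ring
  rw [hd] at hN ⊢
  have hbit : ∀ i, N.testBit (i + k) = (N / 2 ^ k).testBit i := fun i =>
    (Nat.testBit_div_two_pow N i).symm
  rw [show k + 2 + 1 = 3 + k by omega, show k + 2 - 2 = 0 + k by omega,
    show k + 2 - 1 = 1 + k by omega, show k + 2 = 2 + k by omega, hbit, hbit, hbit, hbit] at h
  rw [show k + 2 = 2 + k by omega, hbit]
  have hM : 3 ≤ N / 2 ^ k := (Nat.le_div_iff_mul_le (by positivity)).2 (by linarith)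
  have hC := Nat.choose_three_mod_eight_of_testBit (N / 2 ^ k) h
  rw [mod_eight_eq_of_padicValNat_two_eq (Nat.choose_pos hN).ne' (Nat.choose_pos hM).ne'
    (padicValNat_choose_pow_mul 2 N k 3) (by split_ifs at hC <;> omega), hC]
end

section
/- Any forcing set S for the class of multilinear polynomials of degree at most d in n variables over ℤ/2^kℤ satisfies |S| ≥ Σ_{i=0}^d C(n, i), the number of Boolean points of Hamming weight at most d. -/
open Finset Matrix

theorem Finset.card_filter_card_le (α : Type*) [Fintype α] (d : ℕ) :
    #{T : Finset α | #T ≤ d} = ∑ i ∈ range (d + 1), (Fintype.card α).choose i := by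
  rw [card_eq_sum_card_fiberwise (f := Finset.card) (t := range (d + 1))
    (fun T hT => by simpa [Nat.lt_succ_iff] using hT)]
  refine sum_congr rfl fun i hi => ?_
  have hchoose := card_powersetCard i (univ : Finset α)
  rw [card_univ, powersetCard_eq_filter, powerset_univ] at hchoose
  rw [filter_filter, ← hchoose]
  congr! 2 with T
  rw [mem_range] at hi
  omega

theorem Matrix.exists_mulVec_eq_zero_gcd_eq_one {R m ι : Type*} [CommRing R] [IsDomain R]
    [NormalizedGCDMonoid R] [Fintype m] [Fintype ι] (A : Matrix m ι R)
    (h : Fintype.card m < Fintype.card ι) : ∃ u : ι → R, A *ᵥ u = 0 ∧ univ.gcd u = 1 := by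
  obtain ⟨v, hv, hv0⟩ : ∃ v ∈ LinearMap.ker A.mulVecLin, v ≠ 0 := by
    by_contra! hker
    have := LinearMap.finrank_le_finrank_of_injective
      (LinearMap.ker_eq_bot.mp (LinearMap.ker_eq_bot'.mpr hker))
    simp only [Module.finrank_fintype_fun_eq_card] at this
    omega
  obtain ⟨u, hvu, hu⟩ := extract_gcd v (univ_nonempty_iff.mpr (Function.ne_iff.mp hv0).nonempty)
  refine ⟨u, ?_, hu⟩
  have hg : univ.gcd v ≠ 0 := fun h0 => hv0 (funext fun j => gcd_eq_zero_iff.mp h0 j (mem_univ j))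
  have hvu' : v = univ.gcd v • u := funext fun j => hvu j (mem_univ j)
  rw [LinearMap.mem_ker, mulVecLin_apply, hvu', mulVec_smul] at hv
  exact (smul_eq_zero.mp hv).resolve_left hg

theorem two_dvd_of_two_pow_pred_mul_intCast_eq_zero {k : ℕ} (hk : 1 ≤ k) {u : ℤ}
    (h : (2 ^ (k - 1) : ZMod (2 ^ k)) * u = 0) : 2 ∣ u := by
  have h' : ((2 ^ (k - 1) * u : ℤ) : ZMod (2 ^ k)) = 0 := by push_cast; exact h
  rw [ZMod.intCast_zmod_eq_zero_iff_dvd, Nat.cast_pow, Nat.cast_ofNat,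
    ← Nat.sub_add_cancel hk, pow_succ, Nat.add_sub_cancel] at h'
  exact (mul_dvd_mul_iff_left (by positivity)).mp h'

def monomialMatrix (n d : ℕ) : Matrix (Fin n → Bool) {T : Finset (Fin n) // #T ≤ d} ℤ :=
  of fun x T => ∏ i ∈ T.1, if x i then 1 else 0

section evalML

variable {n k : ℕ}

theorem evalML_decide_mem (c : Finset (Fin n) → ZMod (2 ^ k)) (T : Finset (Fin n)) :
    evalML c (fun i => decide (i ∈ T)) = ∑ U ∈ T.powerset, c U := by
  simp only [evalML, prod_boole, decide_eq_true_eq, mul_ite, mul_one, mul_zero, ← sum_filter]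
  congr 1
  ext U
  simp [subset_iff]

theorem mul_coeff_eq_zero_of_forall_mul_evalML_eq_zero {c : Finset (Fin n) → ZMod (2 ^ k)}
    {a : ZMod (2 ^ k)} (h : ∀ y, a * evalML c y = 0) (T : Finset (Fin n)) : a * c T = 0 := by
  induction T using Finset.strongInduction with
  | H T ih =>
    have hT := h (fun i => decide (i ∈ T))
    rwa [evalML_decide_mem, ← add_sum_erase _ _ (mem_powerset_self T), mul_add, mul_sum,
      sum_eq_zero fun U hU => ih U ?_, add_zero] at hT
    rw [mem_erase, mem_powerset] at hU
    exact ssubset_of_subset_of_ne hU.2 hU.1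

theorem evalML_dite_eq_mulVec {d : ℕ} (u : {T : Finset (Fin n) // #T ≤ d} → ℤ)
    (x : Fin n → Bool) :
    evalML (fun T => if h : #T ≤ d then (u ⟨T, h⟩ : ZMod (2 ^ k)) else 0) x =
      ((monomialMatrix n d *ᵥ u) x : ℤ) := by
  calc _ = ∑ T ∈ univ.filter (#· ≤ d),
        (if h : #T ≤ d then (u ⟨T, h⟩ : ZMod (2 ^ k)) else 0) * ∏ i ∈ T, (if x i then 1 else 0) :=
        (sum_filter_of_ne fun T _ hT => not_not.mp fun h => hT (by rw [dif_neg h, zero_mul])).symm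
    _ = ∑ T : {T : Finset (Fin n) // #T ≤ d}, (u T : ZMod (2 ^ k)) * ∏ i ∈ T.1,
          (if x i then 1 else 0) :=
        (sum_subtype _ (by simp) _).trans (sum_congr rfl fun T _ => by rw [dif_pos T.2])
    _ = _ := by simp [monomialMatrix, mulVec, dotProduct, mul_comm, apply_ite]

end evalML

/-- Any forcing set for multilinear polynomials of degree at most `d` over `ℤ/2^kℤ`
has size at least `∑_{i ≤ d} C(n, i)`. Here "`S` is forcing" means: every such
polynomial vanishing on `S` takes values in the kernel of the projection
`π : ℤ/2^kℤ → ℤ/2ℤ` (i.e. `2^{k-1}·P(y) = 0`) at every Boolean point `y`. -/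
theorem stmt15 (n d k : ℕ) (hk : 1 ≤ k) (S : Finset (Fin n → Bool))
    (hforcing : ∀ c : Finset (Fin n) → ZMod (2 ^ k),
      (∀ T, c T ≠ 0 → T.card ≤ d) → (∀ x ∈ S, evalML c x = 0) →
      ∀ y : Fin n → Bool, (2 ^ (k - 1) : ZMod (2 ^ k)) * evalML c y = 0) :
    ∑ i ∈ Finset.range (d + 1), n.choose i ≤ S.card := by
  by_contra! hlt
  obtain ⟨u, hAu, hu⟩ := ((monomialMatrix n d).submatrix (↑) id : Matrix S _ ℤ)
    |>.exists_mulVec_eq_zero_gcd_eq_one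
      (by rwa [Fintype.card_coe, Fintype.card_subtype, card_filter_card_le, Fintype.card_fin])
  let c : Finset (Fin n) → ZMod (2 ^ k) := fun T =>
    if h : #T ≤ d then (u ⟨T, h⟩ : ZMod (2 ^ k)) else 0
  have hdeg : ∀ T, c T ≠ 0 → #T ≤ d := fun T hT => not_not.mp fun h => hT (dif_neg h)
  have hvanish : ∀ x ∈ S, evalML c x = 0 := fun x hx => by
    rw [evalML_dite_eq_mulVec, show (monomialMatrix n d *ᵥ u) x = 0 from congrFun hAu ⟨x, hx⟩,
      Int.cast_zero]
  have hcoeff := mul_coeff_eq_zero_of_forall_mul_evalML_eq_zero (hforcing c hdeg hvanish)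
  have heven : ∀ T, 2 ∣ u T := fun T =>
    two_dvd_of_two_pow_pred_mul_intCast_eq_zero hk (by simpa [c, T.2] using hcoeff T)
  have h2 : (2 : ℤ) ∣ 1 := hu ▸ dvd_gcd fun T _ => heven T
  norm_num at h2
end

section
/- (Bipartite hypergraph Ramsey) For all natural numbers i, j, r there exists n_R(i,j,r) such that for all n ≥ n_R(i,j,r), for any disjoint sets I, J of size n each, and for any coloring c : C(I,i) × C(J,j) → {0,1} of pairs consisting of an i-subset of I and a j-subset of J, there exist I' ⊆ I and J' ⊆ J with |I'| = |J'| = r such that c is constant on C(I',i) × C(J',j). -/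
/-!
Enumerate `I` and `J` by the same index set `Fin n`, and colour an `(i + j)`-subset `T` of
`Fin n` by `c` applied to the image in `I` of the `i` smallest elements of `T` and the image
in `J` of the remaining `j`. Ordinary hypergraph Ramsey gives a homogeneous `2r`-set `K`;
its lower half indexes `I'` and its upper half `J'`, because an `i`-subset of the lower half
together with a `j`-subset of the upper half is an `(i + j)`-subset of `K` whose `i` smallest
elements are exactly the first part.

Hypergraph Ramsey itself is proved by induction on the size `k` of the coloured sets: using
the statement for `k`, one finds large sets on which the colour of a `(k + 1)`-set depends
only on its minimum, and then pigeonholes over these minima.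
-/

open Finset

universe u

namespace Finset

variable {β : Type*} [LinearOrder β]

/-- The `k` smallest elements of `s` (all of `s` if `#s < k`). -/
def lowest (k : ℕ) (s : Finset β) : Finset β :=
  {x ∈ s | #{y ∈ s | y < x} < k}

theorem disjoint_of_forall_lt {a b : Finset β} (h : ∀ x ∈ a, ∀ y ∈ b, x < y) : Disjoint a b :=
  disjoint_left.2 fun x hxa hxb => lt_irrefl x (h x hxa x hxb)

theorem lowest_union_of_forall_lt {k : ℕ} {a b : Finset β} (ha : #a = k)
    (h : ∀ x ∈ a, ∀ y ∈ b, x < y) : (a ∪ b).lowest k = a := by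
  ext x
  simp only [lowest, mem_filter, mem_union]
  constructor
  · rintro ⟨hx | hx, hcard⟩
    · exact hx
    · have : a ⊆ {y ∈ a ∪ b | y < x} := fun y hy => mem_filter.2 ⟨mem_union_left _ hy, h y hy x hx⟩
      exact absurd (card_le_card this) (by omega)
  · intro hx
    refine ⟨Or.inl hx, ?_⟩
    have : {y ∈ a ∪ b | y < x} ⊆ a.erase x := by
      intro y hy
      obtain ⟨hy, hyx⟩ := mem_filter.1 hy
      rcases mem_union.1 hy with hy | hy
      · exact mem_erase.2 ⟨hyx.ne, hy⟩
      · exact absurd (h x hx y hy) (not_lt.2 hyx.le)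
    have := card_le_card this
    rw [card_erase_of_mem hx] at this
    have := card_pos.2 ⟨x, hx⟩
    omega

theorem exists_union_eq_card_eq_forall_lt {k : ℕ} {s : Finset β} (hk : k ≤ #s) :
    ∃ a b, a ∪ b = s ∧ #a = k ∧ ∀ x ∈ a, ∀ y ∈ b, x < y := by
  let g := s.orderEmbOfFin rfl
  refine ⟨({t : Fin #s | t < k} : Finset _).map g.toEmbedding,
    ({t : Fin #s | ¬t < k} : Finset _).map g.toEmbedding, ?_, ?_, ?_⟩
  · rw [← map_union, filter_union_filter_not_eq, map_orderEmbOfFin_univ]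
  · rw [card_map, Fin.card_filter_val_lt]
    exact min_eq_right hk
  · simp only [mem_map, mem_filter, mem_univ, true_and, RelEmbedding.coe_toEmbedding]
    rintro _ ⟨t, ht, rfl⟩ _ ⟨t', ht', rfl⟩
    exact g.strictMono (Fin.lt_def.2 (by omega))

theorem exists_fin_embedding_map_univ {α : Type*} {I : Finset α} {n : ℕ} (hI : #I = n) :
    ∃ u : Fin n ↪ α, univ.map u = I :=
  ⟨(I.equivFinOfCardEq hI).symm.toEmbedding.trans (.subtype _), by
    rw [← map_map, map_univ_equiv, univ_eq_attach, attach_map_val]⟩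

end Finset

def IsHomogeneous {β γ : Type*} (c : Finset β → γ) (k : ℕ) (T : Finset β) : Prop :=
  ∃ b, ∀ A ⊆ T, #A = k → c A = b

def IsRamseyBound (β γ : Type*) (k r N : ℕ) : Prop :=
  ∀ S : Finset β, N ≤ #S → ∀ c : Finset β → γ, ∃ T ⊆ S, #T = r ∧ IsHomogeneous c k T

theorem exists_subset_color_eq_min' {γ : Type*} {k : ℕ}
    (hk : ∀ r, ∃ N, ∀ (β : Type u) [LinearOrder β], IsRamseyBound β γ k r N) (m : ℕ) :
    ∃ N, ∀ (β : Type u) [LinearOrder β] (S : Finset β), N ≤ #S → ∀ c : Finset β → γ,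
      ∃ T ⊆ S, #T = m ∧ ∃ f : β → γ,
        ∀ A ⊆ T, #A = k + 1 → ∀ hA : A.Nonempty, c A = f (A.min' hA) := by
  induction m with
  | zero =>
    refine ⟨0, fun β _ S _ c => ⟨∅, empty_subset _, rfl, fun _ => c ∅, fun A hA hAk _ => ?_⟩⟩
    rw [subset_empty.1 hA, card_empty] at hAk
    omega
  | succ m ih =>
    obtain ⟨Nm, hNm⟩ := ih
    obtain ⟨No, hNo⟩ := hk Nm
    refine ⟨No + 1, fun β _ S hS c => ?_⟩
    have hS₀ : S.Nonempty := card_pos.1 (by omega)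
    set v := S.min' hS₀
    have hvS : v ∈ S := S.min'_mem hS₀
    -- homogeneity for `A ↦ c (insert v A)` fixes the colour of every set with minimum `v`
    obtain ⟨T₀, hT₀S, hT₀, b, hb⟩ := hNo β (S.erase v)
      (by rw [card_erase_of_mem hvS]; omega) fun A => c (insert v A)
    obtain ⟨T₁, hT₁T₀, hT₁, f, hf⟩ := hNm β T₀ hT₀.ge c
    have hT₁S : T₁ ⊆ S.erase v := hT₁T₀.trans hT₀S
    have hvT₁ : v ∉ T₁ := fun h => (mem_erase.1 (hT₁S h)).1 rfl
    have hTS : insert v T₁ ⊆ S := insert_subset hvS (hT₁S.trans (erase_subset _ _))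
    refine ⟨insert v T₁, hTS, by rw [card_insert_of_notMem hvT₁, hT₁], Function.update f v b,
      fun A hA hAk hA₀ => ?_⟩
    by_cases hvA : v ∈ A
    · have hmin : A.min' hA₀ = v :=
        le_antisymm (min'_le _ _ hvA) (S.min'_le _ (hTS (hA (A.min'_mem hA₀))))
      have hAT₀ : A.erase v ⊆ T₀ := fun x hx =>
        hT₁T₀ ((mem_insert.1 (hA (mem_of_mem_erase hx))).resolve_left (ne_of_mem_erase hx))
      rw [hmin, Function.update_self, ← insert_erase hvA]
      exact hb _ hAT₀ (by rw [card_erase_of_mem hvA, hAk, Nat.add_sub_cancel])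
    · have hAT₁ : A ⊆ T₁ := fun x hx =>
        (mem_insert.1 (hA hx)).resolve_left (by rintro rfl; exact hvA hx)
      have hmin : A.min' hA₀ ≠ v := by
        intro h
        exact hvA (h ▸ A.min'_mem hA₀)
      rw [Function.update_of_ne hmin]
      exact hf A hAT₁ hAk hA₀

theorem exists_isRamseyBound (γ : Type*) [Fintype γ] (k r : ℕ) :
    ∃ N, ∀ (β : Type u) [LinearOrder β], IsRamseyBound β γ k r N := by
  induction k generalizing r with
  | zero =>
    refine ⟨r, fun β _ S hS c => ?_⟩
    obtain ⟨T, hTS, hT⟩ := exists_subset_card_eq hS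
    exact ⟨T, hTS, hT, c ∅, fun A _ hA => by rw [card_eq_zero.1 hA]⟩
  | succ k ih =>
    classical
    obtain ⟨N, hN⟩ := exists_subset_color_eq_min' ih (Fintype.card γ * r)
    refine ⟨N, fun β _ S hS c => ?_⟩
    obtain ⟨T, hTS, hT, f, hf⟩ := hN β S hS c
    obtain ⟨b, -, hb⟩ := exists_le_card_fiber_of_mul_le_card_of_maps_to (s := T) (f := f)
      (fun _ _ => mem_univ _) (univ_nonempty_iff.2 ⟨c ∅⟩) (by rw [card_univ, hT])
    obtain ⟨T', hT'b, hT'⟩ := exists_subset_card_eq hb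
    have hT'T : T' ⊆ T := hT'b.trans (filter_subset _ _)
    refine ⟨T', hT'T.trans hTS, hT', b, fun A hA hAk => ?_⟩
    have hA₀ : A.Nonempty := card_pos.1 (by omega)
    rw [hf A (hA.trans hT'T) hAk hA₀]
    exact (mem_filter.1 (hT'b (hA (A.min'_mem hA₀)))).2

/-- Bipartite hypergraph Ramsey theorem: for all `i, j, r` there is `N` such that for all
`n ≥ N`, disjoint `n`-sets `I, J`, and 2-colourings `c` of pairs `(A, B)` with `A` an
`i`-subset of `I` and `B` a `j`-subset of `J`, there are `r`-sets `I' ⊆ I`, `J' ⊆ J` on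
which `c` is constant. -/
theorem stmt18 (i j r : ℕ) :
    ∃ N : ℕ, ∀ n : ℕ, N ≤ n →
      ∀ (α : Type) (_ : DecidableEq α) (I J : Finset α),
        Disjoint I J → I.card = n → J.card = n →
        ∀ c : Finset α → Finset α → Bool,
          ∃ I' J' : Finset α, I' ⊆ I ∧ J' ⊆ J ∧ I'.card = r ∧ J'.card = r ∧
            ∃ b : Bool, ∀ A B : Finset α,
              A ⊆ I' → B ⊆ J' → A.card = i → B.card = j → c A B = b := by
  obtain ⟨N, hN⟩ := exists_isRamseyBound Bool (i + j) (r + r)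
  refine ⟨N, fun n hn α _ I J _ hI hJ c => ?_⟩
  obtain ⟨u, hu⟩ := exists_fin_embedding_map_univ hI
  obtain ⟨w, hw⟩ := exists_fin_embedding_map_univ hJ
  obtain ⟨K, -, hK, b, hKb⟩ := hN (Fin n) univ (by rwa [card_univ, Fintype.card_fin])
    fun T => c ((T.lowest i).map u) ((T \ T.lowest i).map w)
  obtain ⟨P, Q, rfl, hP, hPQ⟩ := exists_union_eq_card_eq_forall_lt (by omega : r ≤ #K)
  have hQ : #Q = r := by
    rw [card_union_of_disjoint (disjoint_of_forall_lt hPQ)] at hK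
    omega
  refine ⟨P.map u, Q.map w, hu ▸ map_subset_map.2 (subset_univ P),
    hw ▸ map_subset_map.2 (subset_univ Q), by rwa [card_map], by rwa [card_map], b,
    fun A B hA hB hAi hBj => ?_⟩
  obtain ⟨A₀, hA₀, rfl⟩ := subset_map_iff.1 hA
  obtain ⟨B₀, hB₀, rfl⟩ := subset_map_iff.1 hB
  rw [card_map] at hAi hBj
  have hA₀B₀ : ∀ x ∈ A₀, ∀ y ∈ B₀, x < y := fun x hx y hy => hPQ x (hA₀ hx) y (hB₀ hy)
  have hdisj := disjoint_of_forall_lt hA₀B₀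
  have := hKb (A₀ ∪ B₀) (union_subset_union hA₀ hB₀)
    (by rw [card_union_of_disjoint hdisj, hAi, hBj])
  simpa only [lowest_union_of_forall_lt hAi hA₀B₀, union_sdiff_cancel_left hdisj] using this
end
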